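/- Let b + 1 ≤ a ≤ 2b - 2 (so a > b > a - b + 1 > 1). Then the values of the irreducible characters of S_{2a+1} indexed by (a+1, b+1, 1^{a-b-1}) and by (a+1, a-b+2, 1^{b-2}) at the conjugacy class of cycle type (a, b, a-b+1) both equal 0. -/

import Mathlib

/-! In beta-numbers, `λ = (p+m+2, p+1, 1^m)` has beta-set `{p+2m+3, p+m+1} ∪ {1, …, m}`, and
a hook of length `p+m+1` can be removed from it in exactly two ways: from `p+2m+3` (leg length 1),
leaving `(p, 2, 1^m)`, or from `p+m+1` (leg length `m`), leaving the one-row partition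
`(p+m+2)`. Hence `χ^λ((p+m+1) ∪ γ) = (-1)^m χ^{(p+m+2)}(γ) - χ^{(p,2,1^m)}(γ)`. One-row
characters are `1`, and one more hook removal gives `χ^{(p,2,1^m)}(γ) = (-1)^m` both for
`γ = (p, m+2)` with `p ≥ m+3` and for `γ = (m+2, p)` with `2 ≤ p ≤ m+1`. The two partitions of
the theorem are `λ` with `(p, m) = (b, a-b-1)` and `(p, m) = (a-b+1, b-2)`. -/

/-- The beta-set (set of first-column hook lengths) of a partition given as a
weakly decreasing list of parts. -/
def betaSet (l : List ℕ) : List ℕ :=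
  l.zipIdx.map (fun p => p.1 + (l.length - 1 - p.2))

/-- Recover a partition (weakly decreasing list of positive parts) from a
list of distinct beta-numbers. -/
def fromBeta (b : List ℕ) : List ℕ :=
  let s := List.insertionSort (· ≥ ·) b
  (s.zipIdx.map (fun p => p.1 - (s.length - 1 - p.2))).filter (fun x => x ≠ 0)

/-- `MN β γ` is the value of the irreducible character of the symmetric group
indexed by the partition `β` at the conjugacy class of cycle type `γ`,
computed via the Murnaghan–Nakayama rule (phrased in terms of beta-numbers:
removing a rim hook of length `q` replaces a beta-number `x` by `x - q`,
the sign being `(-1)` to the number of beta-numbers strictly between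
`x - q` and `x`, i.e. the leg length of the hook). -/
def MN : List ℕ → List ℕ → ℤ
  | β, [] => if β = [] then 1 else 0
  | β, q :: γ =>
      ((betaSet β).map (fun x =>
        if q ≤ x ∧ x - q ∉ betaSet β then
          (-1) ^ ((betaSet β).filter (fun y => x - q < y ∧ y < x)).length *
            MN (fromBeta ((x - q) :: (betaSet β).erase x)) γ
        else 0)).sum

/-- `l` is a partition of `m`: a weakly decreasing list of positive parts
summing to `m`. -/
def IsPartition (l : List ℕ) (m : ℕ) : Prop :=
  l.Pairwise (· ≥ ·) ∧ (∀ i ∈ l, 0 < i) ∧ l.sum = m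

/-- The conjugate (transpose) partition: `(conjugate l)_i = #{j : l_j > i}`. -/
def conjugate (l : List ℕ) : List ℕ :=
  (List.range (l.foldr max 0)).map (fun i => (l.filter (fun p => i < p)).length)

open List

/-- `betaSet` is `withRevIndex (· + ·)`, and `fromBeta` applies `withRevIndex (· - ·)` to the
sorted beta-numbers. -/
def withRevIndex (f : ℕ → ℕ → ℕ) (s : List ℕ) : List ℕ :=
  s.zipIdx.map fun p => f p.1 (s.length - 1 - p.2)

@[simp] lemma withRevIndex_cons (f : ℕ → ℕ → ℕ) (x : ℕ) (s : List ℕ) :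
    withRevIndex f (x :: s) = f x s.length :: withRevIndex f s := by
  simp only [withRevIndex, zipIdx_cons, map_cons, length_cons, zipIdx_succ, map_map]
  congr 1
  refine map_congr_left fun p _ => ?_
  simp only [Function.comp_apply]
  congr 1
  omega

@[simp] lemma length_withRevIndex (f : ℕ → ℕ → ℕ) (s : List ℕ) :
    (withRevIndex f s).length = s.length := by
  simp [withRevIndex]

lemma betaSet_eq_withRevIndex (l : List ℕ) : betaSet l = withRevIndex (· + ·) l := rfl

@[simp] lemma betaSet_nil : betaSet [] = [] := rfl

@[simp] lemma betaSet_cons (p : ℕ) (l : List ℕ) :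
    betaSet (p :: l) = (p + l.length) :: betaSet l := by
  simp [betaSet_eq_withRevIndex]

@[simp] lemma length_betaSet (l : List ℕ) : (betaSet l).length = l.length := by
  simp [betaSet_eq_withRevIndex]

lemma withRevIndex_sub_betaSet (l : List ℕ) : withRevIndex (· - ·) (betaSet l) = l := by
  induction l with
  | nil => rfl
  | cons p l ih => simp [ih]

lemma lt_of_mem_betaSet {l : List ℕ} {p : ℕ} (h : ∀ x ∈ l, x ≤ p) :
    ∀ y ∈ betaSet l, y < p + l.length := by
  induction l with
  | nil => simp
  | cons r l ih =>
    simp only [mem_cons, forall_eq_or_imp] at h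
    simp only [betaSet_cons, mem_cons, forall_eq_or_imp, length_cons]
    exact ⟨by omega, fun y hy => by have := ih h.2 y hy; omega⟩

lemma pairwise_betaSet {l : List ℕ} (hl : l.Pairwise (· ≥ ·)) :
    (betaSet l).Pairwise (· ≥ ·) := by
  induction l with
  | nil => simp
  | cons p l ih =>
    rw [pairwise_cons] at hl
    rw [betaSet_cons, pairwise_cons]
    exact ⟨fun y hy => (lt_of_mem_betaSet hl.1 y hy).le, ih hl.2⟩

lemma fromBeta_eq_of_perm {L l : List ℕ} (hl : l.Pairwise (· ≥ ·)) (h : L.Perm (betaSet l)) :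
    fromBeta L = l.filter (· ≠ 0) := by
  have hsort : L.insertionSort (· ≥ ·) = betaSet l :=
    ((perm_insertionSort _ L).trans h).eq_of_pairwise' (pairwise_insertionSort _ L)
      (pairwise_betaSet hl)
  have hdef : fromBeta L =
      (withRevIndex (· - ·) (L.insertionSort (· ≥ ·))).filter (· ≠ 0) := rfl
  rw [hdef, hsort, withRevIndex_sub_betaSet]

lemma mem_betaSet_replicate_one {x m : ℕ} :
    x ∈ betaSet (replicate m 1) ↔ 1 ≤ x ∧ x ≤ m := by
  induction m with
  | zero => simp only [replicate_zero, betaSet_nil, not_mem_nil, false_iff]; omega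
  | succ m ih =>
    simp only [replicate_succ, betaSet_cons, mem_cons, ih, length_replicate]
    omega

lemma betaSet_replicate_succ_zero (m : ℕ) :
    betaSet (replicate (m + 1) 0) = betaSet (replicate m 1) ++ [0] := by
  induction m with
  | zero => simp
  | succ m ih =>
    rw [replicate_succ, betaSet_cons, ih, length_replicate, replicate_succ (n := m) (a := 1),
      betaSet_cons, length_replicate, cons_append, Nat.add_comm 1 m, Nat.zero_add]

lemma fromBeta_singleton (r : ℕ) : fromBeta [r] = [r].filter (· ≠ 0) :=
  fromBeta_eq_of_perm (by simp) (by simp)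

lemma fromBeta_zero_cons (m : ℕ) : fromBeta (0 :: betaSet (replicate m 1)) = [] := by
  rw [fromBeta_eq_of_perm (l := replicate (m + 1) 0) (by simp [pairwise_replicate])
    (by rw [betaSet_replicate_succ_zero]; exact (perm_append_singleton _ _).symm)]
  simp

lemma fromBeta_zero_cons_cons {m P : ℕ} (hP : m + 1 < P) :
    fromBeta (0 :: P :: betaSet (replicate m 1)) = [P - (m + 1)] := by
  have hβ : betaSet ((P - (m + 1)) :: replicate (m + 1) 0) =
      P :: betaSet (replicate m 1) ++ [0] := by
    rw [betaSet_cons, betaSet_replicate_succ_zero, length_replicate, Nat.sub_add_cancel hP.le]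
    rfl
  rw [fromBeta_eq_of_perm (l := (P - (m + 1)) :: replicate (m + 1) 0) ?_
    (by rw [hβ]; exact (perm_append_singleton _ _).symm)]
  · simp [show P - (m + 1) ≠ 0 by omega]
  · simp [pairwise_cons, pairwise_replicate]

lemma fromBeta_cons_cons {m Q P : ℕ} (hQ : m < Q) (hP : Q < P) :
    fromBeta (Q :: P :: betaSet (replicate m 1)) =
      (P - (m + 1)) :: (Q - m) :: replicate m 1 := by
  have hβ : betaSet ((P - (m + 1)) :: (Q - m) :: replicate m 1) =
      P :: Q :: betaSet (replicate m 1) := by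
    simp only [betaSet_cons, length_cons, length_replicate]
    congr 2 <;> omega
  rw [fromBeta_eq_of_perm (l := (P - (m + 1)) :: (Q - m) :: replicate m 1) ?_
    (by rw [hβ]; exact .swap _ _ _)]
  · simp [show P - (m + 1) ≠ 0 by omega, show Q - m ≠ 0 by omega]
  · simp only [pairwise_cons, mem_cons, mem_replicate, pairwise_replicate]
    refine ⟨?_, ?_, .inr le_rfl⟩ <;> intro a ha <;> omega

def rimHookTerm (B : List ℕ) (q : ℕ) (γ : List ℕ) (x : ℕ) : ℤ :=
  if q ≤ x ∧ x - q ∉ B then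
    (-1) ^ (B.filter (fun y => x - q < y ∧ y < x)).length *
      MN (fromBeta ((x - q) :: B.erase x)) γ
  else 0

lemma MN_cons (β : List ℕ) (q : ℕ) (γ : List ℕ) :
    MN β (q :: γ) = ((betaSet β).map (rimHookTerm (betaSet β) q γ)).sum := rfl

lemma rimHookTerm_of_lt {B γ : List ℕ} {q x : ℕ} (h : x < q) : rimHookTerm B q γ x = 0 :=
  if_neg fun h' => by omega

lemma rimHookTerm_of_mem {B γ : List ℕ} {q x : ℕ} (h : x - q ∈ B) : rimHookTerm B q γ x = 0 :=
  if_neg fun h' => h'.2 h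

lemma rimHookTerm_of_not_mem {B γ : List ℕ} {q x : ℕ} (hq : q ≤ x) (h : x - q ∉ B) :
    rimHookTerm B q γ x = (-1) ^ (B.filter (fun y => x - q < y ∧ y < x)).length *
      MN (fromBeta ((x - q) :: B.erase x)) γ :=
  if_pos ⟨hq, h⟩

lemma sum_rimHookTerm_betaSet_replicate_one {B γ : List ℕ} {m q : ℕ} (h : m < q) :
    ((betaSet (replicate m 1)).map (rimHookTerm B q γ)).sum = 0 :=
  sum_eq_zero fun z hz => by
    obtain ⟨x, hx, rfl⟩ := mem_map.1 hz
    exact rimHookTerm_of_lt (by have := mem_betaSet_replicate_one.1 hx; omega)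

lemma MN_hook_cons {p m q : ℕ} (γ : List ℕ) (h : m < q) :
    MN (p :: replicate m 1) (q :: γ) =
      rimHookTerm (betaSet (p :: replicate m 1)) q γ (p + m) := by
  rw [MN_cons, betaSet_cons, map_cons, sum_cons, length_replicate,
    sum_rimHookTerm_betaSet_replicate_one h, add_zero]

lemma betaSet_two_rows (p r m : ℕ) :
    betaSet (p :: r :: replicate m 1) = (p + (m + 1)) :: (r + m) :: betaSet (replicate m 1) := by
  rw [betaSet_cons, betaSet_cons, length_cons, length_replicate]

lemma MN_two_rows_cons {p r m q : ℕ} (γ : List ℕ) (h : m < q) :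
    MN (p :: r :: replicate m 1) (q :: γ) =
      rimHookTerm (betaSet (p :: r :: replicate m 1)) q γ (p + (m + 1)) +
        rimHookTerm (betaSet (p :: r :: replicate m 1)) q γ (r + m) := by
  rw [MN_cons, betaSet_two_rows, map_cons, map_cons, sum_cons, sum_cons,
    sum_rimHookTerm_betaSet_replicate_one h, add_zero]

lemma filter_betaSet_replicate_one_eq_nil {m lo hi : ℕ} (h : m ≤ lo) :
    (betaSet (replicate m 1)).filter (fun y => lo < y ∧ y < hi) = [] :=
  filter_eq_nil_iff.2 fun y hy => by
    have := mem_betaSet_replicate_one.1 hy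
    simp only [decide_eq_true_eq]
    omega

lemma filter_betaSet_replicate_one_eq_self {m hi : ℕ} (h : m < hi) :
    (betaSet (replicate m 1)).filter (fun y => 0 < y ∧ y < hi) = betaSet (replicate m 1) :=
  filter_eq_self.2 fun y hy => by
    have := mem_betaSet_replicate_one.1 hy
    simp only [decide_eq_true_eq]
    omega

lemma MN_nil_nil : MN [] [] = 1 := rfl

lemma MN_row {n : ℕ} {γ : List ℕ} (hγ : ∀ q ∈ γ, 0 < q) (hn : γ.sum = n) (hpos : 0 < n) :
    MN [n] γ = 1 := by
  induction γ generalizing n with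
  | nil => rw [sum_nil] at hn; omega
  | cons q γ ih =>
    simp only [mem_cons, forall_eq_or_imp, sum_cons] at hγ hn
    have hterm := rimHookTerm_of_not_mem (B := [n]) (γ := γ) (show q ≤ n by omega)
      (by rw [mem_singleton]; omega)
    rw [MN_cons, betaSet_cons, length_nil, Nat.add_zero, betaSet_nil, map_singleton,
      sum_singleton, hterm, erase_cons_head, fromBeta_singleton,
      show [n].filter (fun y => n - q < y ∧ y < n) = [] by simp, length_nil, pow_zero, one_mul]
    obtain rfl | hγne := eq_or_ne γ []
    · rw [sum_nil, add_zero] at hn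
      rw [hn, Nat.sub_self]
      rfl
    · have hrest : 0 < n - q := by have := sum_pos γ hγ.2 hγne; omega
      rw [filter_cons_of_pos (by simpa using hrest.ne'), filter_nil, ih hγ.2 (by omega) hrest]

lemma MN_hook_cycle {p : ℕ} (m : ℕ) (hp : 0 < p) :
    MN (p :: replicate m 1) [p + m] = (-1) ^ m := by
  have hnot : p + m - (p + m) ∉ betaSet (p :: replicate m 1) := by
    simp only [Nat.sub_self, betaSet_cons, mem_cons, mem_betaSet_replicate_one, length_replicate]
    omega
  rw [MN_hook_cons [] (by omega : m < p + m), rimHookTerm_of_not_mem le_rfl hnot, Nat.sub_self,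
    betaSet_cons, length_replicate, erase_cons_head, fromBeta_zero_cons, filter_cons,
    if_neg (by simp), filter_betaSet_replicate_one_eq_self (by omega), length_betaSet,
    length_replicate, MN_nil_nil, mul_one]

lemma MN_cons_two_replicate_pair {p m : ℕ} (hp : m + 3 ≤ p) :
    MN (p :: 2 :: replicate m 1) [p, m + 2] = (-1) ^ m := by
  have hB := betaSet_two_rows p 2 m
  have hx : p + (m + 1) - p = m + 1 := by omega
  have hnot : m + 1 ∉ betaSet (p :: 2 :: replicate m 1) := by
    rw [hB]; simp only [mem_cons, mem_betaSet_replicate_one]; omega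
  have hsign : ((betaSet (p :: 2 :: replicate m 1)).filter
      fun y => m + 1 < y ∧ y < p + (m + 1)).length = 1 := by
    rw [hB, filter_cons, filter_cons, filter_betaSet_replicate_one_eq_nil (by omega),
      if_neg (by simp), if_pos (by simp only [decide_eq_true_eq]; omega)]
    rfl
  have hcol : MN (1 :: 1 :: replicate m 1) [m + 2] = (-1) ^ (m + 1) := by
    simpa [replicate_succ, Nat.add_comm 1 (m + 1)] using MN_hook_cycle (m + 1) one_pos
  rw [MN_two_rows_cons _ (by omega : m < p), rimHookTerm_of_lt (by omega : 2 + m < p), add_zero,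
    rimHookTerm_of_not_mem (by omega) (by rwa [hx]), hx, hsign, hB, erase_cons_head,
    fromBeta_cons_cons (by omega) (by omega), show 2 + m - (m + 1) = 1 by omega,
    show m + 1 - m = 1 by omega, hcol]
  ring

lemma MN_cons_two_replicate_pair_swap {p m : ℕ} (hp : 2 ≤ p) (hpm : p ≤ m + 1) :
    MN (p :: 2 :: replicate m 1) [m + 2, p] = (-1) ^ m := by
  have hB := betaSet_two_rows p 2 m
  have hx : 2 + m - (m + 2) = 0 := by omega
  have hblocked : p + (m + 1) - (m + 2) ∈ betaSet (p :: 2 :: replicate m 1) := by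
    rw [hB]; simp only [mem_cons, mem_betaSet_replicate_one]; omega
  have hnot : 0 ∉ betaSet (p :: 2 :: replicate m 1) := by
    rw [hB]; simp only [mem_cons, mem_betaSet_replicate_one]; omega
  have hsign : ((betaSet (p :: 2 :: replicate m 1)).filter
      fun y => 0 < y ∧ y < 2 + m).length = m := by
    rw [hB, filter_cons, filter_cons, filter_betaSet_replicate_one_eq_self (by omega),
      if_neg (by simp only [decide_eq_true_eq]; omega), if_neg (by simp), length_betaSet,
      length_replicate]
  rw [MN_two_rows_cons _ (by omega : m < m + 2), rimHookTerm_of_mem hblocked, zero_add,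
    rimHookTerm_of_not_mem (by omega) (by rwa [hx]), hx, hsign, hB,
    erase_cons_tail (by simp only [beq_iff_eq]; omega), erase_cons_head,
    fromBeta_zero_cons_cons (by omega), Nat.add_sub_cancel,
    MN_row (by simp only [mem_singleton, forall_eq]; omega) sum_singleton (by omega), mul_one]

lemma MN_two_rows_cons_eq_sub {p m : ℕ} (γ : List ℕ) (hp : 2 ≤ p) :
    MN ((p + m + 2) :: (p + 1) :: replicate m 1) ((p + m + 1) :: γ) =
      (-1) ^ m * MN [p + m + 2] γ - MN (p :: 2 :: replicate m 1) γ := by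
  set B := betaSet ((p + m + 2) :: (p + 1) :: replicate m 1)
  have hB : B = (p + m + 2 + (m + 1)) :: (p + 1 + m) :: betaSet (replicate m 1) :=
    betaSet_two_rows _ _ _
  have hx₁ : p + m + 2 + (m + 1) - (p + m + 1) = m + 2 := by omega
  have hx₂ : p + 1 + m - (p + m + 1) = 0 := by omega
  have hnot₁ : m + 2 ∉ B := by rw [hB]; simp only [mem_cons, mem_betaSet_replicate_one]; omega
  have hnot₂ : 0 ∉ B := by rw [hB]; simp only [mem_cons, mem_betaSet_replicate_one]; omega
  have hsign₁ : (B.filter fun y => m + 2 < y ∧ y < p + m + 2 + (m + 1)).length = 1 := by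
    rw [hB, filter_cons, filter_cons, filter_betaSet_replicate_one_eq_nil (by omega),
      if_neg (by simp), if_pos (by simp only [decide_eq_true_eq]; omega)]
    rfl
  have hsign₂ : (B.filter fun y => 0 < y ∧ y < p + 1 + m).length = m := by
    rw [hB, filter_cons, filter_cons, filter_betaSet_replicate_one_eq_self (by omega),
      if_neg (by simp only [decide_eq_true_eq]; omega), if_neg (by simp), length_betaSet,
      length_replicate]
  rw [MN_two_rows_cons _ (by omega : m < p + m + 1),
    rimHookTerm_of_not_mem (by omega) (by rwa [hx₁]), hx₁, hsign₁,
    rimHookTerm_of_not_mem (by omega) (by rwa [hx₂]), hx₂, hsign₂, betaSet_two_rows,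
    erase_cons_head, erase_cons_tail (by simp only [beq_iff_eq]; omega), erase_cons_head,
    fromBeta_cons_cons (by omega) (by omega), fromBeta_zero_cons_cons (by omega),
    show p + 1 + m - (m + 1) = p by omega, show m + 2 - m = 2 by omega, Nat.add_sub_cancel]
  ring

lemma MN_two_rows_eq_zero {p m : ℕ} {γ : List ℕ} (hp : 2 ≤ p) (hγ : ∀ q ∈ γ, 0 < q)
    (hsum : γ.sum = p + m + 2) (hcol : MN (p :: 2 :: replicate m 1) γ = (-1) ^ m) :
    MN ((p + m + 2) :: (p + 1) :: replicate m 1) ((p + m + 1) :: γ) = 0 := by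
  rw [MN_two_rows_cons_eq_sub γ hp, MN_row hγ hsum (by omega), hcol, mul_one, sub_self]

/-- For `b + 1 ≤ a ≤ 2b - 2`, the irreducible characters of `S_{2a+1}`
indexed by `(a+1, b+1, 1^{a-b-1})` and by `(a+1, a-b+2, 1^{b-2})` both vanish
at the class of cycle type `(a, b, a-b+1)`. -/
theorem stmt_15 (a b : ℕ) (h1 : b + 1 ≤ a) (h2 : a ≤ 2 * b - 2) :
    MN ((a + 1) :: (b + 1) :: List.replicate (a - b - 1) 1) [a, b, a - b + 1] = 0 ∧
    MN ((a + 1) :: (a - b + 2) :: List.replicate (b - 2) 1) [a, b, a - b + 1] = 0 := by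
  constructor
  · obtain ⟨m, rfl⟩ : ∃ m, a = b + m + 1 := ⟨a - b - 1, by omega⟩
    rw [show b + m + 1 - b - 1 = m by omega, show b + m + 1 - b + 1 = m + 2 by omega]
    exact MN_two_rows_eq_zero (by omega)
      (by simp only [mem_cons, not_mem_nil, or_false, forall_eq_or_imp, forall_eq]; omega)
      (by simp only [sum_cons, sum_nil]; omega)
      (MN_cons_two_replicate_pair (by omega))
  · obtain ⟨p, m, rfl, rfl⟩ : ∃ p m, a = p + m + 1 ∧ b = m + 2 :=
      ⟨a - b + 1, b - 2, by omega, by omega⟩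
    rw [show p + m + 1 - (m + 2) + 2 = p + 1 by omega, show m + 2 - 2 = m by omega,
      show p + m + 1 - (m + 2) + 1 = p by omega]
    exact MN_two_rows_eq_zero (by omega)
      (by simp only [mem_cons, not_mem_nil, or_false, forall_eq_or_imp, forall_eq]; omega)
      (by simp only [sum_cons, sum_nil]; omega)
      (MN_cons_two_replicate_pair_swap (by omega) (by omega))
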